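/- arXiv:1503.01821 — 2 statements merged into one kernel-verified Lean document; each statement's English description precedes it below -/
import Mathlib

section
/- Let f : ℝ → ℝ be continuous and satisfy the sign condition liminf_{|s| → ∞} f(s)/s > −1. Then there exist constants μ₀ ∈ (0,1] and κ_f ≥ 0 such that for all s ∈ ℝ, f(s)·s ≥ −(1 − μ₀) s² − κ_f. -/
/-- pointwise consequence of the sign condition
`liminf_{|s| → ∞} f(s)/s > -1`. -/
theorem sign_condition_pointwise (f : ℝ → ℝ) (hf : Continuous f)
    (hsign : (-1 : EReal) <
      Filter.liminf (fun s : ℝ => ((f s / s : ℝ) : EReal))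
        (Filter.comap (fun s : ℝ => |s|) Filter.atTop)) :
    ∃ μ₀ κf : ℝ, μ₀ ∈ Set.Ioc (0 : ℝ) 1 ∧ 0 ≤ κf ∧
      ∀ s : ℝ, f s * s ≥ -(1 - μ₀) * s ^ 2 - κf := by
  obtain ⟨c, hc1, hc2⟩ := EReal.exists_between_coe_real hsign
  have hc1' : (-1 : ℝ) < c := by
    have h0 : ((-1 : ℝ) : EReal) < (c : EReal) := by
      rw [show ((-1:ℝ):EReal) = (-1:EReal) by norm_num]; exact hc1
    exact_mod_cast h0
  have hev : ∀ᶠ s in Filter.comap (fun s : ℝ => |s|) Filter.atTop,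
      ((c : EReal) < ((f s / s : ℝ) : EReal)) :=
    Filter.eventually_lt_of_lt_liminf hc2
  rw [Filter.eventually_comap] at hev
  obtain ⟨M, hM⟩ := Filter.eventually_atTop.mp hev
  set M' : ℝ := max M 1 with hM'
  set μ₀ : ℝ := min 1 (1 + c) with hμ₀
  have hμ₀pos : 0 < μ₀ := lt_min one_pos (by linarith)
  have hμ₀le : μ₀ ≤ 1 + c := min_le_right _ _
  set g : ℝ → ℝ := fun s => f s * s + (1 - μ₀) * s ^ 2 with hg
  have hgc : Continuous g := by continuity
  obtain ⟨s₀, hs₀mem, hs₀min⟩ := (isCompact_Icc (a := -M') (b := M')).exists_isMinOn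
    ⟨0, by constructor <;> simp [hM'] <;> positivity⟩ hgc.continuousOn
  refine ⟨μ₀, max 0 (-(g s₀)), ⟨hμ₀pos, min_le_left _ _⟩, le_max_left _ _, fun s => ?_⟩
  rcases le_total (|s|) M' with h | h
  · have hmem : s ∈ Set.Icc (-M') M' := abs_le.mp h
    have hmin : g s₀ ≤ g s := hs₀min hmem
    have h2 : -(g s₀) ≤ max 0 (-(g s₀)) := le_max_right _ _
    have hgs : g s = f s * s + (1 - μ₀) * s ^ 2 := rfl
    linarith [hmin, h2, hgs]
  · have hs1 : (1 : ℝ) ≤ |s| := le_trans (le_max_right _ _) h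
    have hsne : s ≠ 0 := by
      intro h0; rw [h0] at hs1; simp at hs1; linarith
    have hMle : M ≤ |s| := le_trans (le_max_left _ _) h
    have := hM (|s|) hMle s rfl
    have hcf : c < f s / s := by exact_mod_cast this
    have heq : f s * s = (f s / s) * s ^ 2 := by field_simp
    have hsq : (0:ℝ) ≤ s ^ 2 := sq_nonneg s
    have h1 : c * s ^ 2 ≤ (f s / s) * s ^ 2 :=
      mul_le_mul_of_nonneg_right hcf.le hsq
    have h2 : (0:ℝ) ≤ max 0 (-(g s₀)) := le_max_left _ _
    rw [ge_iff_le, heq]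
    nlinarith
end

section
/- Let f : ℝ → ℝ be continuous and satisfy the sign condition liminf_{|s| → ∞} f(s)/s > −1, and set F(s) := ∫₀^s f(σ) dσ. Then there exist constants μ₀ ∈ (0,1] and κ_f ≥ 0 such that for all s ∈ ℝ, 2 F(s) ≥ −(1 − μ₀) s² − κ_f. -/
/-- lower bound for the antiderivative `F` under the sign condition
`liminf_{|s| → ∞} f(s)/s > -1`. -/
theorem antiderivative_lower_bound (f : ℝ → ℝ) (hf : Continuous f)
    (hsign : (-1 : EReal) <
      Filter.liminf (fun s : ℝ => ((f s / s : ℝ) : EReal))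
        (Filter.comap (fun s : ℝ => |s|) Filter.atTop)) :
    ∃ μ₀ κf : ℝ, μ₀ ∈ Set.Ioc (0 : ℝ) 1 ∧ 0 ≤ κf ∧
      ∀ s : ℝ, 2 * (∫ σ in (0 : ℝ)..s, f σ) ≥ -(1 - μ₀) * s ^ 2 - κf := by
  obtain ⟨c, hc1, hc2⟩ := EReal.lt_iff_exists_real_btwn.mp hsign
  have hc1' : (-1 : ℝ) < c := by
    rw [show ((-1:EReal)) = ((-1:ℝ):EReal) by simp] at hc1
    exact EReal.coe_lt_coe_iff.mp hc1
  have hev := Filter.eventually_lt_of_lt_liminf hc2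
  rw [Filter.eventually_comap] at hev
  obtain ⟨b, hb⟩ := Filter.eventually_atTop.mp hev
  set μ₀ : ℝ := min (1 + c) 1 with hμ
  have hμ0 : 0 < μ₀ := lt_min (by linarith) one_pos
  have hμ1 : μ₀ ≤ 1 := min_le_right _ _
  have hμc : μ₀ - 1 ≤ c := by
    have := min_le_left (1 + c) 1
    linarith
  set R : ℝ := max b 1 with hR
  have hR1 : (1:ℝ) ≤ R := le_max_right _ _
  have hR0 : (0:ℝ) < R := by linarith
  have hkey : ∀ s : ℝ, b ≤ |s| → c < f s / s := by
    intro s hs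
    have := hb |s| hs s rfl
    exact_mod_cast this
  have keypos : ∀ s : ℝ, R ≤ s → (μ₀ - 1) * s ≤ f s := by
    intro s hs
    have hs0 : 0 < s := by linarith
    have habs : b ≤ |s| := by
      rw [abs_of_pos hs0]; exact le_trans (le_max_left _ _) hs
    have h := hkey s habs
    have h2 : μ₀ - 1 < f s / s := lt_of_le_of_lt hμc h
    have := (lt_div_iff₀ hs0).mp h2
    linarith
  have keyneg : ∀ s : ℝ, s ≤ -R → f s ≤ (μ₀ - 1) * s := by
    intro s hs
    have hs0 : s < 0 := by linarith
    have habs : b ≤ |s| := by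
      rw [abs_of_neg hs0]
      have : b ≤ R := le_max_left _ _
      linarith
    have h := hkey s habs
    have h2 : μ₀ - 1 < f s / s := lt_of_le_of_lt hμc h
    have := (lt_div_iff_of_neg hs0).mp h2
    linarith
  -- monotone bound on the right
  have FA : ∀ s : ℝ, R ≤ s →
      2*(∫ σ in (0:ℝ)..R, f σ) + (1-μ₀)*R^2 ≤ 2*(∫ σ in (0:ℝ)..s, f σ) + (1-μ₀)*s^2 := by
    intro s hs
    have hint : (∫ σ in R..s, (μ₀-1)*σ) ≤ ∫ σ in R..s, f σ := by
      apply intervalIntegral.integral_mono_on hs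
        ((continuous_const.mul continuous_id).intervalIntegrable _ _)
        (hf.intervalIntegrable _ _)
      intro σ hσ
      exact keypos σ hσ.1
    have hval : (∫ σ in R..s, (μ₀-1)*σ) = (μ₀-1)*((s^2 - R^2)/2) := by
      rw [intervalIntegral.integral_const_mul]
      simp [integral_id]
    have hsplit : (∫ σ in (0:ℝ)..R, f σ) + ∫ σ in R..s, f σ = ∫ σ in (0:ℝ)..s, f σ :=
      intervalIntegral.integral_add_adjacent_intervals (hf.intervalIntegrable _ _)
        (hf.intervalIntegrable _ _)
    nlinarith [hint, hval, hsplit]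
  -- monotone bound on the left
  have FB : ∀ s : ℝ, s ≤ -R →
      2*(∫ σ in (0:ℝ)..(-R), f σ) + (1-μ₀)*R^2 ≤ 2*(∫ σ in (0:ℝ)..s, f σ) + (1-μ₀)*s^2 := by
    intro s hs
    have hint : (∫ σ in s..(-R), f σ) ≤ ∫ σ in s..(-R), (μ₀-1)*σ := by
      apply intervalIntegral.integral_mono_on hs
        (hf.intervalIntegrable _ _)
        ((continuous_const.mul continuous_id).intervalIntegrable _ _)
      intro σ hσ
      exact keyneg σ hσ.2
    have hval : (∫ σ in s..(-R), (μ₀-1)*σ) = (μ₀-1)*(((-R)^2 - s^2)/2) := by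
      rw [intervalIntegral.integral_const_mul]
      simp [integral_id]
    have hsplit : (∫ σ in (0:ℝ)..s, f σ) + ∫ σ in s..(-R), f σ = ∫ σ in (0:ℝ)..(-R), f σ :=
      intervalIntegral.integral_add_adjacent_intervals (hf.intervalIntegrable _ _)
        (hf.intervalIntegrable _ _)
    nlinarith [hint, hval, hsplit]
  -- compact minimum on [-R, R]
  have hgc : Continuous (fun s : ℝ => 2*(∫ σ in (0:ℝ)..s, f σ) + (1-μ₀)*s^2) := by
    have h1 : Continuous (fun s : ℝ => ∫ σ in (0:ℝ)..s, f σ) :=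
      intervalIntegral.continuous_primitive (fun a b => hf.intervalIntegrable a b) 0
    exact (continuous_const.mul h1).add (continuous_const.mul (continuous_pow 2))
  obtain ⟨x₀, hx₀, hmin⟩ := (isCompact_Icc (a := -R) (b := R)).exists_isMinOn
    (Set.nonempty_Icc.mpr (by linarith)) hgc.continuousOn
  set m : ℝ := 2*(∫ σ in (0:ℝ)..x₀, f σ) + (1-μ₀)*x₀^2 with hm
  refine ⟨μ₀, max (-m) 0, ⟨hμ0, hμ1⟩, le_max_right _ _, ?_⟩
  intro s
  have hκ : -m ≤ max (-m) 0 := le_max_left _ _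
  rcases le_total s R with h1 | h1
  · rcases le_total (-R) s with h2 | h2
    · have h4 : m ≤ 2*(∫ σ in (0:ℝ)..s, f σ) + (1-μ₀)*s^2 :=
        hmin (Set.mem_Icc.mpr ⟨h2, h1⟩)
      nlinarith [h4]
    · have h3 := FB s h2
      have h4 : m ≤ 2*(∫ σ in (0:ℝ)..(-R), f σ) + (1-μ₀)*(-R)^2 :=
        hmin (Set.mem_Icc.mpr ⟨le_refl (-R), by linarith⟩)
      nlinarith [h3, h4]
  · have h3 := FA s h1
    have h4 : m ≤ 2*(∫ σ in (0:ℝ)..R, f σ) + (1-μ₀)*R^2 :=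
      hmin (Set.mem_Icc.mpr ⟨by linarith, le_refl R⟩)
    nlinarith [h3, h4]
end
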